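/- For all natural numbers n, m, j: S_{s,q}[n+1, m+j+1] = Σ_{k=m}^{n} Σ_{r=0}^{n−k} S_{s,q}[k,m] · q^{r((k−m)(s−1)+k+1) + k + (k−m)(s−1)} · binom(n−k, r)_{q^s} · S_{s,q}[r,j] · Π_{i=0}^{n−k−r−1} [(k−m)(s−1) + k + 1 + s·i]_q (the outer sum being empty, hence 0, when m > n). -/

import Mathlib

/-- The `q`-bracket `[t]_q = (q^t - 1)/(q - 1)` (real exponentiation). -/
noncomputable def qBracket (q t : ℝ) : ℝ := (q ^ t - 1) / (q - 1)

open Classical in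
/-- The `Q`-binomial coefficient: the sum of `Q^(t₁+⋯+t_{n-k})` over all weakly
increasing integer tuples `0 ≤ t₁ ≤ ⋯ ≤ t_{n-k} ≤ k` when `k ≤ n`, and `0` when `k > n`. -/
noncomputable def qBinom (Q : ℝ) (n k : ℕ) : ℝ :=
  if k ≤ n then
    ∑ f ∈ Finset.univ.filter (fun f : Fin (n - k) → Fin (k + 1) => Monotone f),
      Q ^ (∑ i, (f i : ℕ))
  else 0

/-- The generalized `q`-Stirling numbers `S_{s,q}[n,k]` of Goldman–Haglund type. -/
noncomputable def genStirling (s q : ℝ) : ℕ → ℕ → ℝ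
  | 0, 0 => 1
  | 0, _ + 1 => 0
  | _ + 1, 0 => 0
  | n + 1, k + 1 =>
    if k + 1 ≤ n + 1 then
      q ^ (s * (n : ℝ) - (s - 1) * (k : ℝ)) * genStirling s q n k
        + qBracket q (s * (n : ℝ) - (s - 1) * ((k : ℝ) + 1)) * genStirling s q n (k + 1)
    else 0

/-!
Write `A = (k - m)(s - 1) + k + 1`. The inner sum over `r`,
`G_A(N, j) = ∑ r, q^(r A) binom(N, r)_{q^s} S[r, j] ∏_{i < N - r} [A + s i]_q`,
obeys the recurrence of `S_{s,q}` with `s N` replaced by `A + s N`: split the `q^s`-binomial by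
Pascal's rule, expand `S[r + 1, j + 1]` by its recurrence and merge brackets with
`[u + v]_q = q^u [v]_q + [u]_q`; the leftover terms telescope in `r`. Since
`A + s (n - k) = s (n + 1) - (s - 1) (m + 1)` does not depend on `k`, the right-hand side then obeys
the recurrence of `S[n + 1, m + j + 1]` in `n`, and induction on `n` concludes.
-/
open Finset

section MonotoneTupleSum

variable (Q : ℝ)

open Classical in
noncomputable def monotoneTupleSum (M K : ℕ) : ℝ :=
  ∑ f ∈ univ.filter (fun f : Fin M → Fin (K + 1) => Monotone f), Q ^ (∑ i, (f i : ℕ))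

lemma monotoneTupleSum_zero_left (K : ℕ) : monotoneTupleSum Q 0 K = 1 := by
  simp [monotoneTupleSum, Subsingleton.monotone]

lemma monotoneTupleSum_zero_right (M : ℕ) : monotoneTupleSum Q M 0 = 1 := by
  simp [monotoneTupleSum, Subsingleton.monotone', Fin.eq_zero]

lemma monotone_cons_zero {d K : ℕ} {g : Fin d → Fin (K + 1)} (hg : Monotone g) :
    Monotone (Fin.cons 0 g : Fin (d + 1) → Fin (K + 1)) := by
  intro a b hab
  induction a using Fin.cases with
  | zero => exact Fin.zero_le _
  | succ a =>
    induction b using Fin.cases with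
    | zero => exact absurd hab (by simp)
    | succ b => simpa using hg (Fin.succ_le_succ_iff.mp hab)

open Classical in
lemma sum_monotone_head_eq_zero (d K : ℕ) :
    ∑ f ∈ univ.filter (fun f : Fin (d + 1) → Fin (K + 1) => Monotone f ∧ f 0 = 0),
      Q ^ (∑ i, (f i : ℕ)) = monotoneTupleSum Q d K := by
  refine sum_nbij' Fin.tail (fun g => (Fin.cons 0 g : Fin (d + 1) → Fin (K + 1))) ?_ ?_ ?_ ?_ ?_
  · intro f hf
    simp only [mem_filter, mem_univ, true_and] at hf ⊢
    exact hf.1.comp Fin.strictMono_succ.monotone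
  · intro g hg
    simp only [mem_filter, mem_univ, true_and] at hg ⊢
    exact ⟨monotone_cons_zero hg, rfl⟩
  · intro f hf
    simp only [mem_filter, mem_univ, true_and] at hf
    rw [← hf.2, Fin.cons_self_tail]
  · intro g _
    exact Fin.tail_cons _ _
  · intro f hf
    simp only [mem_filter, mem_univ, true_and] at hf
    rw [Fin.sum_univ_succ, hf.2]
    simp [Fin.tail]

open Classical in
lemma sum_monotone_head_ne_zero (d K : ℕ) :
    ∑ f ∈ univ.filter (fun f : Fin (d + 1) → Fin (K + 2) => Monotone f ∧ ¬f 0 = 0),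
      Q ^ (∑ i, (f i : ℕ)) = Q ^ (d + 1) * monotoneTupleSum Q (d + 1) K := by
  rw [monotoneTupleSum, mul_sum]
  symm
  refine sum_nbij' (Fin.succ ∘ ·) (Fin.predAbove 0 ∘ ·) ?_ ?_ ?_ ?_ ?_
  · intro g hg
    simp only [mem_filter, mem_univ, true_and] at hg ⊢
    exact ⟨Fin.strictMono_succ.monotone.comp hg, Fin.succ_ne_zero _⟩
  · intro f hf
    simp only [mem_filter, mem_univ, true_and] at hf ⊢
    exact (Fin.predAbove_right_monotone 0).comp hf.1
  · intro g _
    funext x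
    exact Fin.predAbove_zero_succ
  · intro f hf
    simp only [mem_filter, mem_univ, true_and] at hf
    have hne : ∀ x, f x ≠ 0 := fun x h0 =>
      hf.2 (nonpos_iff_eq_zero.mp (h0 ▸ hf.1 (Fin.zero_le x)))
    funext x
    exact Fin.succ_predAbove_zero (hne x)
  · intro g _
    simp [sum_add_distrib, pow_add, mul_comm]

lemma monotoneTupleSum_succ_succ (d K : ℕ) :
    monotoneTupleSum Q (d + 1) (K + 1)
      = monotoneTupleSum Q d (K + 1) + Q ^ (d + 1) * monotoneTupleSum Q (d + 1) K := by
  classical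
  rw [← sum_monotone_head_eq_zero Q d (K + 1), ← sum_monotone_head_ne_zero Q d K]
  conv_lhs => rw [monotoneTupleSum, ← sum_filter_add_sum_filter_not _ (fun f => f 0 = 0)]
  rw [filter_filter, filter_filter]

end MonotoneTupleSum

section QBinom

variable (Q : ℝ)

lemma qBinom_eq_monotoneTupleSum {n k : ℕ} (h : k ≤ n) :
    qBinom Q n k = monotoneTupleSum Q (n - k) k := by
  rw [qBinom, if_pos h]
  rfl

lemma qBinom_of_lt {n k : ℕ} (h : n < k) : qBinom Q n k = 0 := by
  rw [qBinom, if_neg h.not_ge]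

lemma qBinom_zero_right (n : ℕ) : qBinom Q n 0 = 1 := by
  rw [qBinom_eq_monotoneTupleSum Q n.zero_le, monotoneTupleSum_zero_right]

lemma qBinom_self (n : ℕ) : qBinom Q n n = 1 := by
  rw [qBinom_eq_monotoneTupleSum Q le_rfl, Nat.sub_self, monotoneTupleSum_zero_left]

lemma qBinom_succ_succ (n k : ℕ) :
    qBinom Q (n + 1) (k + 1) = qBinom Q n (k + 1) + Q ^ (n - k) * qBinom Q n k := by
  rcases lt_trichotomy k n with h | rfl | h
  · obtain ⟨d, rfl⟩ : ∃ d, n = k + d + 1 := ⟨n - k - 1, by omega⟩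
    rw [qBinom_eq_monotoneTupleSum Q (by omega : k + 1 ≤ k + d + 1 + 1),
      qBinom_eq_monotoneTupleSum Q (by omega : k + 1 ≤ k + d + 1),
      qBinom_eq_monotoneTupleSum Q (by omega : k ≤ k + d + 1),
      show k + d + 1 + 1 - (k + 1) = d + 1 by omega, show k + d + 1 - (k + 1) = d by omega,
      show k + d + 1 - k = d + 1 by omega]
    exact monotoneTupleSum_succ_succ Q d k
  · rw [qBinom_self, qBinom_self, qBinom_of_lt Q k.lt_succ_self]
    simp
  · rw [qBinom_of_lt Q (by omega), qBinom_of_lt Q (by omega), qBinom_of_lt Q h]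
    simp

end QBinom

lemma qBracket_add {q : ℝ} (hq : 0 < q) (u v : ℝ) :
    qBracket q (u + v) = q ^ u * qBracket q v + qBracket q u := by
  simp only [qBracket, Real.rpow_add hq, ← mul_div_assoc, ← add_div]
  ring

section GenStirling

variable (s q : ℝ)

lemma genStirling_of_lt : ∀ {n k : ℕ}, n < k → genStirling s q n k = 0
  | 0, _ + 1, _ => rfl
  | _ + 1, _ + 1, h => by rw [genStirling, if_neg (by omega)]

lemma genStirling_zero_left (k : ℕ) : genStirling s q 0 k = if k = 0 then 1 else 0 := by
  cases k <;> rfl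

lemma genStirling_succ_succ (n k : ℕ) :
    genStirling s q (n + 1) (k + 1)
      = q ^ (s * n - (s - 1) * k) * genStirling s q n k
        + qBracket q (s * n - (s - 1) * (k + 1)) * genStirling s q n (k + 1) := by
  by_cases h : k ≤ n
  · rw [genStirling, if_pos (by omega)]
  · rw [genStirling, if_neg (by omega), genStirling_of_lt s q (by omega : n < k),
      genStirling_of_lt s q (by omega : n < k + 1)]
    ring

end GenStirling

section ShiftedStirling

variable (s q A : ℝ)

noncomputable def shiftedStirlingTerm (L N j r : ℕ) : ℝ :=
  q ^ (r * A) * qBinom (q ^ s) N r * genStirling s q r j *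
    ∏ i ∈ range (L - r), qBracket q (A + s * i)

noncomputable def shiftedStirling (N j : ℕ) : ℝ :=
  ∑ r ∈ range (N + 1), shiftedStirlingTerm s q A N N j r

lemma shiftedStirlingTerm_zero_left (L N j : ℕ) :
    shiftedStirlingTerm s q A L N (j + 1) 0 = 0 := by
  simp [shiftedStirlingTerm, genStirling_zero_left]

lemma shiftedStirlingTerm_of_lt (L N j : ℕ) {r : ℕ} (hr : N < r) :
    shiftedStirlingTerm s q A L N j r = 0 := by
  simp [shiftedStirlingTerm, qBinom_of_lt _ hr]

variable {q} in
lemma shiftedStirlingTerm_succ_succ (hq : 0 < q) (N j : ℕ) {r : ℕ} (hr : r ≤ N) :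
    shiftedStirlingTerm s q A (N + 1) (N + 1) (j + 1) (r + 1)
      = (shiftedStirlingTerm s q A (N + 1) N (j + 1) (r + 1)
          - shiftedStirlingTerm s q A (N + 1) N (j + 1) r)
        + (q ^ (A + s * N - (s - 1) * j) * shiftedStirlingTerm s q A N N j r
          + qBracket q (A + s * N - (s - 1) * (j + 1)) * shiftedStirlingTerm s q A N N (j + 1) r) := by
  obtain ⟨d, rfl⟩ : ∃ d, N = r + d := ⟨N - r, by omega⟩
  simp only [shiftedStirlingTerm]
  rw [show r + d + 1 - (r + 1) = d by omega, show r + d + 1 - r = d + 1 by omega,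
    show r + d - r = d by omega, prod_range_succ, qBinom_succ_succ, show r + d - r = d by omega,
    genStirling_succ_succ s q r j]
  push_cast
  have h_bracket : qBracket q (A + s * (r + d) - (s - 1) * (j + 1))
      = q ^ (A + s * d) * qBracket q (s * r - (s - 1) * (j + 1)) + qBracket q (A + s * d) := by
    rw [← qBracket_add hq]; ring_nf
  have h_pow : q ^ (A + s * (r + d) - (s - 1) * j)
      = q ^ (A + s * d) * q ^ (s * r - (s - 1) * j) := by
    rw [← Real.rpow_add hq]; ring_nf
  have h_weight : q ^ ((r + 1) * A) * (q ^ s) ^ d = q ^ (r * A) * q ^ (A + s * d) := by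
    rw [← Real.rpow_mul_natCast hq.le, ← Real.rpow_add hq, ← Real.rpow_add hq]; ring_nf
  rw [h_bracket, h_pow]
  linear_combination (qBinom (q ^ s) (r + d) r *
    (q ^ (s * r - (s - 1) * j) * genStirling s q r j
      + qBracket q (s * r - (s - 1) * (j + 1)) * genStirling s q r (j + 1)) *
    ∏ i ∈ range d, qBracket q (A + s * i)) * h_weight

variable {q} in
lemma shiftedStirling_succ_succ (hq : 0 < q) (N j : ℕ) :
    shiftedStirling s q A (N + 1) (j + 1)
      = q ^ (A + s * N - (s - 1) * j) * shiftedStirling s q A N j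
        + qBracket q (A + s * N - (s - 1) * (j + 1)) * shiftedStirling s q A N (j + 1) := by
  rw [shiftedStirling, sum_range_succ', shiftedStirlingTerm_zero_left, add_zero,
    sum_congr rfl fun r hr => shiftedStirlingTerm_succ_succ s A hq N j (mem_range_succ_iff.mp hr),
    sum_add_distrib, sum_range_sub (shiftedStirlingTerm s q A (N + 1) N (j + 1)),
    shiftedStirlingTerm_of_lt s q A _ _ _ N.lt_succ_self, shiftedStirlingTerm_zero_left,
    sum_add_distrib, ← mul_sum, ← mul_sum]
  simp only [shiftedStirling, sub_self, zero_add]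

lemma shiftedStirling_zero_right (N : ℕ) :
    shiftedStirling s q A N 0 = ∏ i ∈ range N, qBracket q (A + s * i) := by
  rw [shiftedStirling, sum_eq_single 0]
  · simp [shiftedStirlingTerm, qBinom_zero_right, genStirling_zero_left]
  · intro r _ hr
    obtain ⟨r, rfl⟩ := Nat.exists_eq_succ_of_ne_zero hr
    simp [shiftedStirlingTerm, genStirling]
  · simp

lemma shiftedStirling_succ_zero (N : ℕ) :
    shiftedStirling s q A (N + 1) 0 = qBracket q (A + s * N) * shiftedStirling s q A N 0 := by
  rw [shiftedStirling_zero_right, shiftedStirling_zero_right, prod_range_succ, mul_comm]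

lemma shiftedStirling_zero_left (j : ℕ) : shiftedStirling s q A 0 j = genStirling s q 0 j := by
  simp [shiftedStirling, shiftedStirlingTerm, qBinom_zero_right]

end ShiftedStirling

theorem genStirling_succ_add_eq_sum (s : ℝ) {q : ℝ} (hq : 0 < q) (m n j : ℕ) :
    genStirling s q (n + 1) (m + j + 1)
      = ∑ k ∈ Icc m n, genStirling s q k m * q ^ (s * k - (s - 1) * m) *
          shiftedStirling s q ((k - m) * (s - 1) + k + 1) (n - k) j := by
  induction n generalizing j with
  | zero =>
    rcases m with _ | m
    · rcases j with _ | j <;>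
        simp [genStirling_succ_succ, genStirling_zero_left, shiftedStirling_zero_left]
    · rw [Icc_eq_empty (by omega), sum_empty, genStirling_of_lt s q (by omega)]
  | succ n ih =>
    rcases Nat.lt_or_ge (n + 1) m with hm | hm
    · rw [Icc_eq_empty (by omega), sum_empty, genStirling_of_lt s q (by omega)]
    have h_shift : ∀ k ∈ Icc m n, ((k : ℝ) - m) * (s - 1) + k + 1 + s * ((n - k : ℕ) : ℝ)
        = s * (n + 1 : ℕ) - (s - 1) * (m + 1) := by
      intro k hk
      rw [Nat.cast_sub (mem_Icc.mp hk).2]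
      push_cast
      ring
    rw [sum_Icc_succ_top hm, Nat.sub_self, shiftedStirling_zero_left]
    rcases j with _ | j
    · rw [genStirling_succ_succ, ih 0, genStirling_zero_left, if_pos rfl, mul_one, mul_sum,
        add_comm]
      congr 1
      · refine sum_congr rfl fun k hk => ?_
        rw [show n + 1 - k = n - k + 1 by grind, shiftedStirling_succ_zero, h_shift k hk]
        push_cast
        ring
      · ring
    · rw [genStirling_zero_left, if_neg j.succ_ne_zero, mul_zero, add_zero, genStirling_succ_succ,
        ih (j + 1), ← add_assoc, ih j, mul_sum, mul_sum, ← sum_add_distrib]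
      refine sum_congr rfl fun k hk => ?_
      rw [show n + 1 - k = n - k + 1 by grind, shiftedStirling_succ_succ _ _ hq,
        h_shift k hk]
      push_cast
      ring_nf

theorem stirling_shift_convolution_first_general (q s : ℝ) (hq : 0 < q) (n m j : ℕ) :
    genStirling s q (n + 1) (m + j + 1)
    = ∑ k ∈ Finset.Icc m n, ∑ r ∈ Finset.range (n - k + 1),
        genStirling s q k m *
          q ^ ((r : ℝ) * (((k : ℝ) - (m : ℝ)) * (s - 1) + (k : ℝ) + 1)
            + (k : ℝ) + ((k : ℝ) - (m : ℝ)) * (s - 1)) *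
          qBinom (q ^ s) (n - k) r * genStirling s q r j *
          ∏ i ∈ Finset.range (n - k - r),
            qBracket q (((k : ℝ) - (m : ℝ)) * (s - 1) + (k : ℝ) + 1 + s * (i : ℝ)) := by
  rw [genStirling_succ_add_eq_sum s hq]
  refine sum_congr rfl fun k _ => ?_
  rw [shiftedStirling, mul_sum]
  refine sum_congr rfl fun r _ => ?_
  have h_exp : (r : ℝ) * ((k - m) * (s - 1) + k + 1) + k + (k - m) * (s - 1)
      = r * ((k - m) * (s - 1) + k + 1) + (s * k - (s - 1) * m) := by ring
  rw [shiftedStirlingTerm, h_exp, Real.rpow_add hq]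
  ring

/-- Convolution identity for generalized `q`-Stirling numbers, first form
(Theorem on `S_{s,q}[n+1, m+j+1]`). -/
theorem stirling_shift_convolution_first (q s : ℝ) (hq : 0 < q) (hq1 : q ≠ 1) (n m j : ℕ) :
    genStirling s q (n + 1) (m + j + 1)
    = ∑ k ∈ Finset.Icc m n, ∑ r ∈ Finset.range (n - k + 1),
        genStirling s q k m *
          q ^ ((r : ℝ) * (((k : ℝ) - (m : ℝ)) * (s - 1) + (k : ℝ) + 1)
            + (k : ℝ) + ((k : ℝ) - (m : ℝ)) * (s - 1)) *
          qBinom (q ^ s) (n - k) r * genStirling s q r j *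
          ∏ i ∈ Finset.range (n - k - r),
            qBracket q (((k : ℝ) - (m : ℝ)) * (s - 1) + (k : ℝ) + 1 + s * (i : ℝ)) :=
  stirling_shift_convolution_first_general q s hq n m j
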